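/- The Hilbert function of R/Ĩ(s,t) for 2 ≤ s ≤ t is H(d) = (d·Σ_{j=1}^s (r_j − 1) + 1) · C(d + r_{t+1}⋯r_n − 1, d) · Π_{i=s+1}^t C(d + r_i − 1, d). Equivalently: the number of distinct monomials of degree d in R modulo Ĩ(s,t) equals this expression, where a monomial Π_{i=1}^d x_{a_i} is determined by the quantity Σ_i ‖a_i‖_s, the multisets {a_{1,i},…,a_{d,i}} for i = s+1,…,t, and the multiset of tuples (a_{j,t+1},…,a_{j,n}). -/

import Mathlib

/-!
Modulo `Ĩ(s,t)` the monomial `∏_{a ∈ m} x_a` depends only on its profile: the total `s`-norm,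
the multiset of entries in each middle coordinate `s < j ≤ t`, and the multiset of tails
`(a_{t+1}, …, a_n)`. Swaps at middle coordinates move a prescribed entry into a chosen factor.
A swap at a head coordinate, applied to suitable `s`-equivalent representatives, transfers
`s`-norm between two factors, and for `s ≥ 2` one unit can always be transferred by two such
swaps. Peeling off one factor at a time then identifies any two monomials with equal profiles.

Conversely `x_a ↦ [profile of a]` defines an algebra map from `R/Ĩ(s,t)` to the monoid algebra
of profiles, so monomials with distinct profiles are linearly independent. The dimension is thus
the number of profiles of degree `d`: `d·Σ_{j≤s}(r_j - 1) + 1` values of the total `s`-norm,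
times the numbers of size-`d` multisets of middle entries and of tails.
-/

open Finset

/-- The set of indices: `a i` (a value in `Fin (r i)`) represents the entry `a_i = (a i) + 1`
of an index in `[r 1] × ⋯ × [r n]`.  So `0` corresponds to the entry `1` and `r i - 1`
to the entry `r i`. -/
abbrev Idx (n : ℕ) (r : Fin n → ℕ) := ∀ i : Fin n, Fin (r i)

/-- `a` and `b` are `s`-equivalent: equal sums of the first `s` components and equal
remaining components. -/
def sEquiv (n s : ℕ) (r : Fin n → ℕ) (a b : Idx n r) : Prop :=
  (∑ i ∈ Finset.univ.filter (fun i : Fin n => (i : ℕ) < s), (a i : ℕ)) =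
    (∑ i ∈ Finset.univ.filter (fun i : Fin n => (i : ℕ) < s), (b i : ℕ)) ∧
  ∀ i : Fin n, s ≤ (i : ℕ) → a i = b i

/-- The switch of `a` and `b` with respect to a single component `i`. -/
def sw {n : ℕ} {r : Fin n → ℕ} (i : Fin n) (a b : Idx n r) : Idx n r :=
  fun j => if j = i then b j else a j

/-- The switch of `a` and `b` with respect to a set `L` of components. -/
def swL {n : ℕ} {r : Fin n → ℕ} (L : Finset (Fin n)) (a b : Idx n r) : Idx n r :=
  fun j => if j ∈ L then b j else a j

/-- An `(s,t)`-switchable subset of the set of indices. -/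
def Switchable (n s t : ℕ) (r : Fin n → ℕ) (S : Set (Idx n r)) : Prop :=
  (∀ a b, a ∈ S → b ∈ S → hammingDist a b = 2 →
    ∀ i : Fin n, (i : ℕ) < t → sw i a b ∈ S) ∧
  (∀ a b, a ∈ S → sEquiv n s r a b → b ∈ S)

/-- `c 0, c 1, …, c k` is a path in `S`: all members lie in `S` and consecutive members
have Hamming distance `1`. -/
def IsPathIn {n : ℕ} {r : Fin n → ℕ} (S : Set (Idx n r)) (c : ℕ → Idx n r) (k : ℕ) : Prop :=
  (∀ j ≤ k, c j ∈ S) ∧ ∀ j < k, hammingDist (c j) (c (j + 1)) = 1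

/-- `a` and `b` are connected in `S`. -/
def ConnectedIn {n : ℕ} {r : Fin n → ℕ} (S : Set (Idx n r)) (a b : Idx n r) : Prop :=
  ∃ k c, c 0 = a ∧ c k = b ∧ IsPathIn S c k

/-- The setoid of `s`-equivalence on the set of indices. -/
def sSetoid (n s : ℕ) (r : Fin n → ℕ) : Setoid (Idx n r) where
  r := sEquiv n s r
  iseqv := ⟨fun _ => ⟨rfl, fun _ _ => rfl⟩,
    fun h => ⟨h.1.symm, fun i hi => (h.2 i hi).symm⟩,
    fun h g => ⟨h.1.trans g.1, fun i hi => (h.2 i hi).trans (g.2 i hi)⟩⟩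

/-- The variables of the ring `R` are indexed by `s`-equivalence classes of indices,
i.e. `x a = x b` iff `a` and `b` are `s`-equivalent. -/
abbrev IQ (n s : ℕ) (r : Fin n → ℕ) := Quotient (sSetoid n s r)

/-- The variable `x_a` of the polynomial ring `R = k[x_a : a ∈ N]`. -/
noncomputable def xvar (k : Type) [CommRing k] {n : ℕ} (s : ℕ) {r : Fin n → ℕ}
    (a : Idx n r) : MvPolynomial (IQ n s r) k :=
  MvPolynomial.X (Quotient.mk (sSetoid n s r) a)

/-- The generalized `2 × 2` minor `f_{i,a,b} = x_a x_b − x_{sw(i,a,b)} x_{sw(i,b,a)}`. -/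
noncomputable def gminor (k : Type) [CommRing k] {n : ℕ} (s : ℕ) {r : Fin n → ℕ}
    (i : Fin n) (a b : Idx n r) : MvPolynomial (IQ n s r) k :=
  xvar k s a * xvar k s b - xvar k s (sw i a b) * xvar k s (sw i b a)

/-- The ideal `I(s,t)`, generated by the slice minors `f_{i,a,b}` with `d(a,b) = 2`
and `i ∈ [t]`. -/
noncomputable def ISlice (k : Type) [CommRing k] {n : ℕ} (s t : ℕ) (r : Fin n → ℕ) :
    Ideal (MvPolynomial (IQ n s r) k) :=
  Ideal.span {f | ∃ i : Fin n, ∃ a b : Idx n r,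
    (i : ℕ) < t ∧ hammingDist a b = 2 ∧ f = gminor k s i a b}

/-- The ideal `Ĩ(s,t)`, generated by all generalized minors `f_{i,a,b}` with `i ∈ [t]`. -/
noncomputable def ITilde (k : Type) [CommRing k] {n : ℕ} (s t : ℕ) (r : Fin n → ℕ) :
    Ideal (MvPolynomial (IQ n s r) k) :=
  Ideal.span {f | ∃ i : Fin n, ∃ a b : Idx n r, (i : ℕ) < t ∧ f = gminor k s i a b}

/-- The ideal `Ĩ(s,t)_S`, generated by the generalized minors `f_{i,a,b}` with `i ∈ [t]`
and `a, b` connected in `S`. -/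
noncomputable def ITildeS (k : Type) [CommRing k] {n : ℕ} (s t : ℕ) {r : Fin n → ℕ}
    (S : Set (Idx n r)) : Ideal (MvPolynomial (IQ n s r) k) :=
  Ideal.span {f | ∃ i : Fin n, ∃ a b : Idx n r,
    (i : ℕ) < t ∧ ConnectedIn S a b ∧ f = gminor k s i a b}

open MvPolynomial

theorem exists_le_sum_eq {ι : Type*} (F : Finset ι) (b : ι → ℕ) {N : ℕ}
    (hN : N ≤ ∑ i ∈ F, b i) : ∃ v : ι → ℕ, (∀ i, v i ≤ b i) ∧ ∑ i ∈ F, v i = N := by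
  classical
  induction F using Finset.induction_on generalizing N with
  | empty => exact ⟨0, fun _ => Nat.zero_le _, by simp_all⟩
  | insert i F hi ih =>
    rw [sum_insert hi] at hN
    obtain ⟨v, hvb, hvN⟩ := ih (N := N - min (b i) N) (by omega)
    refine ⟨Function.update v i (min (b i) N), fun j => ?_, ?_⟩
    · rcases eq_or_ne j i with rfl | hj
      · simp
      · simpa [hj] using hvb j
    · rw [sum_insert hi, Function.update_self,
        sum_congr rfl fun j hj => Function.update_of_ne (ne_of_mem_of_not_mem hj hi) _ _, hvN]
      omega

theorem MvPolynomial.prod_map_X_toMultiset {σ R : Type*} [CommSemiring R] (u : σ →₀ ℕ) :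
    ((Finsupp.toMultiset u).map X).prod = monomial u (1 : R) := by
  rw [monomial_eq, C_1, one_mul, Finsupp.toMultiset_map, Finsupp.prod_toMultiset,
    Finsupp.prod_mapDomain_index (fun _ => pow_zero _) (fun _ _ _ => pow_add _ _ _)]

theorem Sym.exists_map_univ_val_eq {α : Type*} {d : ℕ} (μ : Sym α d) :
    ∃ g : Fin d → α, univ.val.map g = μ := by
  obtain ⟨m, hm⟩ := μ
  obtain ⟨l, rfl⟩ := Quot.exists_rep m
  have hl : l.length = d := hm
  subst hl
  exact ⟨l.get, by rw [Fin.univ_val_map, List.ofFn_get]; rfl⟩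

section Coordinates

variable {n s t : ℕ} {r : Fin n → ℕ}

def headCoords (n s : ℕ) : Finset (Fin n) := univ.filter fun i : Fin n => (i : ℕ) < s

def midCoords (n s t : ℕ) : Finset (Fin n) :=
  univ.filter fun i : Fin n => s ≤ (i : ℕ) ∧ (i : ℕ) < t

def tailCoords (n t : ℕ) : Finset (Fin n) := univ.filter fun i : Fin n => t ≤ (i : ℕ)

@[simp] theorem mem_headCoords {i : Fin n} : i ∈ headCoords n s ↔ (i : ℕ) < s := by
  simp [headCoords]

@[simp] theorem mem_midCoords {i : Fin n} : i ∈ midCoords n s t ↔ s ≤ (i : ℕ) ∧ (i : ℕ) < t := by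
  simp [midCoords]

@[simp] theorem mem_tailCoords {i : Fin n} : i ∈ tailCoords n t ↔ t ≤ (i : ℕ) := by
  simp [tailCoords]

/-- The paper's `‖a‖_s` minus `s`, since the entries of an `Idx` start at `0`. -/
def sNorm (s : ℕ) (a : Idx n r) : ℕ := ∑ i ∈ headCoords n s, (a i : ℕ)

def sNormMax (n s : ℕ) (r : Fin n → ℕ) : ℕ := ∑ i ∈ headCoords n s, (r i - 1)

def sNormMaxExcept (n s : ℕ) (r : Fin n → ℕ) (i : Fin n) : ℕ :=
  ∑ j ∈ (headCoords n s).erase i, (r j - 1)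

theorem sNormMaxExcept_add {i : Fin n} (hi : i ∈ headCoords n s) :
    sNormMaxExcept n s r i + (r i - 1) = sNormMax n s r :=
  sum_erase_add _ _ hi

theorem sNorm_le_sNormMax (a : Idx n r) : sNorm s a ≤ sNormMax n s r :=
  sum_le_sum fun i _ => Nat.le_sub_one_of_lt (a i).isLt

theorem sum_map_sNorm_le (m : Multiset (Idx n r)) :
    (m.map (sNorm s)).sum ≤ Multiset.card m * sNormMax n s r := by
  simpa using Multiset.sum_le_card_nsmul (m.map (sNorm s)) _ (by simp [sNorm_le_sNormMax])

def EqAbove (s : ℕ) (a b : Idx n r) : Prop := ∀ i : Fin n, s ≤ (i : ℕ) → a i = b i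

theorem EqAbove.symm {a b : Idx n r} (h : EqAbove s a b) : EqAbove s b a :=
  fun i hi => (h i hi).symm

theorem EqAbove.trans {a b c : Idx n r} (h : EqAbove s a b) (h' : EqAbove s b c) :
    EqAbove s a c :=
  fun i hi => (h i hi).trans (h' i hi)

theorem sEquiv_of_sNorm_eq {a b : Idx n r} (h : sNorm s a = sNorm s b) (h' : EqAbove s a b) :
    sEquiv n s r a b :=
  ⟨h, h'⟩

theorem eqAbove_sw {i : Fin n} (hi : (i : ℕ) < s) (a b : Idx n r) : EqAbove s (sw i a b) a :=
  fun j hj => if_neg (by rintro rfl; omega)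

theorem sw_eq_update (i : Fin n) (a b : Idx n r) :
    sw i a b = Function.update a i (b i) := by
  funext j
  rcases eq_or_ne j i with rfl | hj
  · simp [sw]
  · simp [sw, hj]

theorem sNorm_sw_add_apply {i : Fin n} (hi : i ∈ headCoords n s) (a b : Idx n r) :
    sNorm s (sw i a b) + a i = sNorm s a + b i := by
  have hrest : ∑ j ∈ (headCoords n s).erase i, (sw i a b j : ℕ) =
      ∑ j ∈ (headCoords n s).erase i, (a j : ℕ) :=
    sum_congr rfl fun j hj => by rw [sw, if_neg (ne_of_mem_erase hj)]
  rw [sNorm, sNorm, ← sum_erase_add _ _ hi, ← sum_erase_add _ _ hi, hrest, sw, if_pos rfl]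
  ring

theorem sNorm_sw_add_sNorm_sw (i : Fin n) (a b : Idx n r) :
    sNorm s (sw i a b) + sNorm s (sw i b a) = sNorm s a + sNorm s b := by
  simp only [sNorm, ← sum_add_distrib, sw]
  exact sum_congr rfl fun j _ => by split_ifs <;> ring

def withHead (s : ℕ) (g : Idx n r) (v : Fin n → ℕ) : Idx n r := fun i =>
  if h : (i : ℕ) < s ∧ v i < r i then ⟨v i, h.2⟩ else g i

theorem withHead_eqAbove (g : Idx n r) (v : Fin n → ℕ) : EqAbove s (withHead s g v) g :=
  fun _ hi => dif_neg (by omega)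

theorem val_withHead {g : Idx n r} {v : Fin n → ℕ} {i : Fin n} (hi : (i : ℕ) < s)
    (hv : v i < r i) : (withHead s g v i : ℕ) = v i := by
  simp [withHead, hi, hv]

theorem sNorm_withHead {g : Idx n r} {v : Fin n → ℕ} (hv : ∀ i ∈ headCoords n s, v i < r i) :
    sNorm s (withHead s g v) = ∑ i ∈ headCoords n s, v i :=
  sum_congr rfl fun i hi => val_withHead (mem_headCoords.1 hi) (hv i hi)

theorem exists_eqAbove_sNorm_eq (g : Idx n r) {N : ℕ} (hN : N ≤ sNormMax n s r) :
    ∃ p, EqAbove s p g ∧ sNorm s p = N := by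
  obtain ⟨v, hvb, hvN⟩ := exists_le_sum_eq (headCoords n s) (fun i => r i - 1) hN
  have hv : ∀ i ∈ headCoords n s, v i < r i := fun i _ => by
    have := (g i).pos; have := hvb i; omega
  exact ⟨withHead s g v, withHead_eqAbove g v, (sNorm_withHead hv).trans hvN⟩

theorem exists_eqAbove_apply_eq_sNorm_eq (g : Idx n r) {i : Fin n} (hi : i ∈ headCoords n s)
    {a N : ℕ} (ha : a < r i) (haN : a ≤ N) (hN : N ≤ a + sNormMaxExcept n s r i) :
    ∃ p, EqAbove s p g ∧ (p i : ℕ) = a ∧ sNorm s p = N := by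
  obtain ⟨v, hvb, hvN⟩ :=
    exists_le_sum_eq ((headCoords n s).erase i) (fun j => r j - 1) (N := N - a) (by
      rw [sNormMaxExcept] at hN; omega)
  have hw : ∀ j ∈ headCoords n s, Function.update v i a j < r j := fun j _ => by
    rcases eq_or_ne j i with rfl | hj
    · simpa using ha
    · have := (g j).pos; have := hvb j; simp only [Function.update_of_ne hj]; omega
  refine ⟨withHead s g (Function.update v i a), withHead_eqAbove g _, ?_, ?_⟩
  · rw [val_withHead (mem_headCoords.1 hi) (hw i hi), Function.update_self]
  · rw [sNorm_withHead hw, sum_update_of_mem hi, sdiff_singleton_eq_erase, hvN]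
    omega

theorem exists_mem_headCoords_two_mul_le (hs : 2 ≤ s) (hsn : s ≤ n) :
    ∃ i ∈ headCoords n s, 2 * (r i - 1) ≤ sNormMax n s r := by
  let i₀ : Fin n := ⟨0, by omega⟩
  let i₁ : Fin n := ⟨1, by omega⟩
  have h₀ : i₀ ∈ headCoords n s := mem_headCoords.2 (show 0 < s by omega)
  have h₁ : i₁ ∈ headCoords n s := mem_headCoords.2 (show 1 < s by omega)
  have hpair : (r i₀ - 1) + (r i₁ - 1) ≤ sNormMax n s r := by
    rw [← sum_pair (f := fun i => r i - 1) (by simp [i₀, i₁, Fin.ext_iff])]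
    exact sum_le_sum_of_subset (insert_subset h₀ (singleton_subset_iff.2 h₁))
  rcases le_total (r i₀) (r i₁) with h | h
  · exact ⟨i₀, h₀, by omega⟩
  · exact ⟨i₁, h₁, by omega⟩

end Coordinates

section QuotMonomial

variable (k : Type) [CommRing k] {n : ℕ} (s t : ℕ) {r : Fin n → ℕ}

noncomputable def quotMonomial (m : Multiset (Idx n r)) :
    MvPolynomial (IQ n s r) k ⧸ ITilde k s t r :=
  Ideal.Quotient.mk _ (m.map (xvar k s)).prod

variable {k s t}

theorem quotMonomial_cons (a : Idx n r) (m : Multiset (Idx n r)) :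
    quotMonomial k s t (a ::ₘ m) = Ideal.Quotient.mk _ (xvar k s a) * quotMonomial k s t m := by
  simp [quotMonomial]

theorem quotMonomial_cons_congr {m m' : Multiset (Idx n r)} (a : Idx n r)
    (h : quotMonomial k s t m = quotMonomial k s t m') :
    quotMonomial k s t (a ::ₘ m) = quotMonomial k s t (a ::ₘ m') := by
  rw [quotMonomial_cons, quotMonomial_cons, h]

theorem quotMonomial_cons_of_sEquiv {a b : Idx n r} (h : sEquiv n s r a b)
    (m : Multiset (Idx n r)) :
    quotMonomial k s t (a ::ₘ m) = quotMonomial k s t (b ::ₘ m) := by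
  rw [quotMonomial_cons, quotMonomial_cons, xvar, xvar, Quotient.sound h]

theorem quotMonomial_cons_cons_of_sEquiv {u v u' v' : Idx n r} (hu : sEquiv n s r u u')
    (hv : sEquiv n s r v v') (m : Multiset (Idx n r)) :
    quotMonomial k s t (u ::ₘ v ::ₘ m) = quotMonomial k s t (u' ::ₘ v' ::ₘ m) := by
  rw [quotMonomial_cons_of_sEquiv hu, Multiset.cons_swap, quotMonomial_cons_of_sEquiv hv,
    Multiset.cons_swap]

theorem quotMonomial_sw {i : Fin n} (hi : (i : ℕ) < t) (a b : Idx n r) (m : Multiset (Idx n r)) :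
    quotMonomial k s t (a ::ₘ b ::ₘ m) = quotMonomial k s t (sw i a b ::ₘ sw i b a ::ₘ m) := by
  have hminor : Ideal.Quotient.mk (ITilde k s t r) (xvar k s a * xvar k s b) =
      Ideal.Quotient.mk _ (xvar k s (sw i a b) * xvar k s (sw i b a)) :=
    Ideal.Quotient.eq.2 (Ideal.subset_span ⟨i, a, b, hi, rfl⟩)
  simp only [quotMonomial_cons, ← mul_assoc, ← map_mul, hminor]

end QuotMonomial

theorem image_monomial_eq_image_quotMonomial (k : Type) [CommRing k] {n : ℕ} (s t : ℕ)
    (r : Fin n → ℕ) (d : ℕ) :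
    (fun u : IQ n s r →₀ ℕ => Ideal.Quotient.mk (ITilde k s t r) (monomial u (1 : k))) ''
      {u | (u.sum fun _ e => e) = d} = quotMonomial k s t '' {m | Multiset.card m = d} := by
  classical
  have key : ∀ M : Multiset (IQ n s r), ∀ m : Multiset (Idx n r), m.map Quotient.mk'' = M →
      quotMonomial k s t m = Ideal.Quotient.mk _ (monomial (Multiset.toFinsupp M) (1 : k)) := by
    rintro _ m rfl
    rw [← prod_map_X_toMultiset, Multiset.toFinsupp_toMultiset, Multiset.map_map]
    rfl
  ext y
  constructor
  · rintro ⟨u, hu, rfl⟩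
    refine ⟨(Finsupp.toMultiset u).map Quotient.out,
      (Multiset.card_map _ _).trans ((Finsupp.card_toMultiset u).trans hu), ?_⟩
    rw [key (Finsupp.toMultiset u) _ (by simp [Multiset.map_map]),
      Finsupp.toMultiset_toFinsupp]
  · rintro ⟨m, hm, rfl⟩
    set M : Multiset (IQ n s r) := m.map Quotient.mk''
    have hdeg := Finsupp.card_toMultiset (Multiset.toFinsupp M)
    rw [Multiset.toFinsupp_toMultiset, Multiset.card_map, hm] at hdeg
    exact ⟨Multiset.toFinsupp M, hdeg.symm, (key M m rfl).symm⟩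

section Exchange

variable {k : Type} [CommRing k] {n s t : ℕ} {r : Fin n → ℕ}

/-- Swapping the `i`-th entries of representatives `p ≈ u` and `q ≈ v` turns `sNorm u` into
`(sNorm u - p_i) + q_i`, and the two summands range independently over
`[sNorm u - (r_i - 1), min (sNorm u) E]` and `[sNorm v - E, min (sNorm v) (r_i - 1)]`,
where `E = sNormMaxExcept n s r i`. -/
theorem quotMonomial_cons_cons_eq_of_sNorm_bounds {i : Fin n} (hi : i ∈ headCoords n s)
    (hit : (i : ℕ) < t) {u v u' v' : Idx n r} (hu : EqAbove s u' u) (hv : EqAbove s v' v)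
    (hsum : sNorm s u' + sNorm s v' = sNorm s u + sNorm s v)
    (hlo : sNorm s u - (r i - 1) + (sNorm s v - sNormMaxExcept n s r i) ≤ sNorm s u')
    (hhi : sNorm s u' ≤
      min (sNorm s u) (sNormMaxExcept n s r i) + min (sNorm s v) (r i - 1))
    (m : Multiset (Idx n r)) :
    quotMonomial k s t (u ::ₘ v ::ₘ m) = quotMonomial k s t (u' ::ₘ v' ::ₘ m) := by
  have hC := sNormMaxExcept_add (r := r) hi
  have hN := sNorm_le_sNormMax (s := s) u
  have hM := sNorm_le_sNormMax (s := s) v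
  have hr := (u i).pos
  set E := sNormMaxExcept n s r i
  set b := max (sNorm s v - E) (sNorm s u' - min (sNorm s u) E)
  obtain ⟨p, hpu, hpi, hpN⟩ := exists_eqAbove_apply_eq_sNorm_eq u hi
    (a := sNorm s u + b - sNorm s u') (N := sNorm s u) (by omega) (by omega) (by omega)
  obtain ⟨q, hqv, hqi, hqM⟩ := exists_eqAbove_apply_eq_sNorm_eq v hi
    (a := b) (N := sNorm s v) (by omega) (by omega) (by omega)
  have hp' := sNorm_sw_add_apply hi p q
  have hq' := sNorm_sw_add_apply hi q p
  have his : (i : ℕ) < s := mem_headCoords.1 hi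
  calc quotMonomial k s t (u ::ₘ v ::ₘ m)
      = quotMonomial k s t (p ::ₘ q ::ₘ m) :=
        quotMonomial_cons_cons_of_sEquiv (sEquiv_of_sNorm_eq hpN.symm hpu.symm)
          (sEquiv_of_sNorm_eq hqM.symm hqv.symm) m
    _ = quotMonomial k s t (sw i p q ::ₘ sw i q p ::ₘ m) := quotMonomial_sw hit p q m
    _ = quotMonomial k s t (u' ::ₘ v' ::ₘ m) :=
        quotMonomial_cons_cons_of_sEquiv
          (sEquiv_of_sNorm_eq (by omega) (((eqAbove_sw his p q).trans hpu).trans hu.symm))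
          (sEquiv_of_sNorm_eq (by omega) (((eqAbove_sw his q p).trans hqv).trans hv.symm)) m

/-- Both pairs reach the same split of the total `s`-norm by one swap at `i` each: the two
ranges of reachable splits overlap because `r_i - 1` is at most half of `sNormMax`. -/
theorem quotMonomial_cons_cons_eq_of_sNorm_succ {i : Fin n} (hi : i ∈ headCoords n s)
    (hit : (i : ℕ) < t) (hri : 2 ≤ r i) (hci : 2 * (r i - 1) ≤ sNormMax n s r)
    {u v u' v' : Idx n r} (hu : EqAbove s u' u) (hv : EqAbove s v' v)
    (hu' : sNorm s u' = sNorm s u + 1) (hv' : sNorm s v' + 1 = sNorm s v)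
    (m : Multiset (Idx n r)) :
    quotMonomial k s t (u ::ₘ v ::ₘ m) = quotMonomial k s t (u' ::ₘ v' ::ₘ m) := by
  have hC := sNormMaxExcept_add (r := r) hi
  have hN := sNorm_le_sNormMax (s := s) u'
  have hM := sNorm_le_sNormMax (s := s) v
  set E := sNormMaxExcept n s r i
  set x := max (sNorm s u - (r i - 1) + (sNorm s v - E))
    (sNorm s u' - (r i - 1) + (sNorm s v' - E))
  obtain ⟨w, hwu, hwx⟩ := exists_eqAbove_sNorm_eq (s := s) u (N := x) (by omega)
  obtain ⟨w', hwv, hwx'⟩ :=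
    exists_eqAbove_sNorm_eq (s := s) v (N := sNorm s u + sNorm s v - x) (by omega)
  rw [quotMonomial_cons_cons_eq_of_sNorm_bounds hi hit hwu hwv (by omega) (by omega) (by omega),
    quotMonomial_cons_cons_eq_of_sNorm_bounds hi hit (hwu.trans hu.symm) (hwv.trans hv.symm)
      (by omega) (by omega) (by omega)]

theorem quotMonomial_cons_cons_eq_of_sNorm_add_eq (hr : ∀ i, 2 ≤ r i) (hs : 2 ≤ s) (hst : s ≤ t)
    (hsn : s ≤ n) {u v u' v' : Idx n r} (hu : EqAbove s u' u)
    (hv : EqAbove s v' v) (hsum : sNorm s u' + sNorm s v' = sNorm s u + sNorm s v)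
    (m : Multiset (Idx n r)) :
    quotMonomial k s t (u ::ₘ v ::ₘ m) = quotMonomial k s t (u' ::ₘ v' ::ₘ m) := by
  wlog hle : sNorm s u ≤ sNorm s u' generalizing u v u' v'
  · exact (this hu.symm hv.symm hsum.symm (by omega)).symm
  obtain ⟨i, hi, hci⟩ := exists_mem_headCoords_two_mul_le (r := r) hs hsn
  have hit : (i : ℕ) < t := (mem_headCoords.1 hi).trans_le hst
  obtain ⟨δ, hδ⟩ := Nat.exists_eq_add_of_le hle
  induction δ generalizing u' v' with
  | zero =>
    exact quotMonomial_cons_cons_of_sEquiv (sEquiv_of_sNorm_eq (by omega) hu.symm)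
      (sEquiv_of_sNorm_eq (by omega) hv.symm) m
  | succ δ ih =>
    have := sNorm_le_sNormMax (s := s) u'
    have := sNorm_le_sNormMax (s := s) v
    obtain ⟨w, hwu, hw⟩ := exists_eqAbove_sNorm_eq (s := s) u (N := sNorm s u + δ) (by omega)
    obtain ⟨w', hwv, hw'⟩ := exists_eqAbove_sNorm_eq (s := s) v (N := sNorm s v' + 1) (by omega)
    rw [ih hwu hwv (by omega) (by omega) hw]
    exact quotMonomial_cons_cons_eq_of_sNorm_succ hi hit (hr i) hci (hu.trans hwu.symm)
      (hv.trans hwv.symm) (by omega) (by omega) m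

end Exchange

section Profile

variable {n s t : ℕ} {r : Fin n → ℕ}

abbrev Tail (n t : ℕ) (r : Fin n → ℕ) : Type := ∀ i : tailCoords n t, Fin (r i)

def tail (t : ℕ) (a : Idx n r) : Tail n t r := fun i => a i

abbrev Profile (n s t : ℕ) (r : Fin n → ℕ) : Type :=
  ℕ × (∀ j : midCoords n s t, Multiset (Fin (r j))) × Multiset (Tail n t r)

def profile (s t : ℕ) (m : Multiset (Idx n r)) : Profile n s t r :=
  ((m.map (sNorm s)).sum, fun j => m.map fun a => a j, m.map (tail t))

@[simp] theorem profile_zero : profile s t (0 : Multiset (Idx n r)) = 0 := rfl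

theorem profile_add (m m' : Multiset (Idx n r)) :
    profile s t (m + m') = profile s t m + profile s t m' := by
  simp only [profile, Multiset.map_add, Multiset.sum_add]
  rfl

theorem profile_cons (a : Idx n r) (m : Multiset (Idx n r)) :
    profile s t (a ::ₘ m) = profile s t {a} + profile s t m := by
  rw [← Multiset.singleton_add, profile_add]

theorem profile_eq_iff {m m' : Multiset (Idx n r)} :
    profile s t m = profile s t m' ↔ (m.map (sNorm s)).sum = (m'.map (sNorm s)).sum ∧
      (∀ j : midCoords n s t, (m.map fun a => a j) = m'.map fun a => a j) ∧
      m.map (tail t) = m'.map (tail t) := by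
  simp [profile, funext_iff]

theorem card_eq_of_profile_eq {m m' : Multiset (Idx n r)} (h : profile s t m = profile s t m') :
    Multiset.card m = Multiset.card m' := by
  simpa using congrArg Multiset.card (profile_eq_iff.1 h).2.2

theorem profile_singleton_eq_of_sEquiv (hst : s ≤ t) {a b : Idx n r} (h : sEquiv n s r a b) :
    profile s t {a} = profile s t {b} := by
  have htail : tail t a = tail t b := funext fun i => h.2 i (hst.trans (mem_tailCoords.1 i.2))
  refine profile_eq_iff.2 ⟨?_, fun j => by simp [h.2 j (mem_midCoords.1 j.2).1], by simp [htail]⟩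
  simp only [Multiset.map_singleton, Multiset.sum_singleton]
  exact h.1

theorem profile_sw {i : Fin n} (hi : (i : ℕ) < t) (a b : Idx n r) :
    profile s t {a} + profile s t {b} = profile s t {sw i a b} + profile s t {sw i b a} := by
  have htail : ∀ x y : Idx n r, tail t (sw i x y) = tail t x := fun x y =>
    funext fun j => if_neg (by have := mem_tailCoords.1 j.2; omega)
  rw [← profile_add, ← profile_add]
  simp only [profile, Multiset.singleton_add, Multiset.map_cons, Multiset.map_singleton,
    Multiset.sum_cons, Multiset.sum_singleton, htail, sNorm_sw_add_sNorm_sw]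
  refine Prod.ext rfl (Prod.ext (funext fun j => ?_) rfl)
  by_cases hj : (j : Fin n) = i
  · simp only [sw, hj, if_pos]
    exact Multiset.cons_swap _ _ _
  · simp only [sw, if_neg hj]

end Profile

section ProfileHom

open AddMonoidAlgebra

variable (k : Type) [CommRing k] {n s t : ℕ} {r : Fin n → ℕ}

noncomputable def profileHom (hst : s ≤ t) :
    MvPolynomial (IQ n s r) k →ₐ[k] AddMonoidAlgebra k (Profile n s t r) :=
  aeval fun q => Quotient.lift (fun a => single (profile s t {a}) (1 : k))
    (fun _ _ h => by rw [profile_singleton_eq_of_sEquiv hst h]) q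

variable {k}

theorem profileHom_xvar (hst : s ≤ t) (a : Idx n r) :
    profileHom k hst (xvar k s a) = single (profile s t {a}) 1 :=
  aeval_X _ _

theorem profileHom_eq_zero_of_mem (hst : s ≤ t) {f : MvPolynomial (IQ n s r) k}
    (hf : f ∈ ITilde k s t r) : profileHom k hst f = 0 := by
  refine (Ideal.span_le (I := RingHom.ker (profileHom k hst)) |>.2 ?_ hf)
  rintro _ ⟨i, a, b, hi, rfl⟩
  rw [SetLike.mem_coe, RingHom.mem_ker, gminor, map_sub, map_mul, map_mul,
    profileHom_xvar, profileHom_xvar, profileHom_xvar, profileHom_xvar, single_mul_single,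
    single_mul_single, profile_sw hi, sub_self]

variable (k) in
noncomputable def quotProfileHom (hst : s ≤ t) :
    (MvPolynomial (IQ n s r) k ⧸ ITilde k s t r) →ₐ[k] AddMonoidAlgebra k (Profile n s t r) :=
  Ideal.Quotient.liftₐ _ (profileHom k hst) fun _ hf => profileHom_eq_zero_of_mem hst hf

theorem quotProfileHom_quotMonomial (hst : s ≤ t) (m : Multiset (Idx n r)) :
    quotProfileHom k hst (quotMonomial k s t m) = single (profile s t m) 1 := by
  induction m using Multiset.induction_on with
  | empty =>
    rw [quotMonomial, Multiset.map_zero, Multiset.prod_zero, map_one, map_one, profile_zero,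
      AddMonoidAlgebra.one_def]
  | cons a m ih =>
    have hx : quotProfileHom k hst (Ideal.Quotient.mk _ (xvar k s a)) =
        single (profile s t {a}) 1 :=
      profileHom_xvar hst a
    rw [quotMonomial_cons, map_mul, ih, hx, single_mul_single, one_mul, profile_cons]

theorem profile_eq_of_quotMonomial_eq [Nontrivial k] (hst : s ≤ t) {m m' : Multiset (Idx n r)}
    (h : quotMonomial k s t m = quotMonomial k s t m') : profile s t m = profile s t m' :=
  single_left_injective one_ne_zero <| by
    simpa only [quotProfileHom_quotMonomial] using congrArg (quotProfileHom k hst) h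

end ProfileHom

section Spanning

variable {k : Type} [CommRing k] {n s t : ℕ} {r : Fin n → ℕ}

theorem exists_quotMonomial_eq_cons_update {i : Fin n} (hi : (i : ℕ) < t) {b : Idx n r}
    {m : Multiset (Idx n r)} {x : Fin (r i)} (hx : x ∈ (b ::ₘ m).map fun a => a i) :
    ∃ m', quotMonomial k s t (b ::ₘ m) = quotMonomial k s t (Function.update b i x ::ₘ m') ∧
      ∀ j ≠ i, (m'.map fun a => a j) = m.map fun a => a j := by
  rw [Multiset.map_cons, Multiset.mem_cons] at hx
  rcases hx with rfl | hx
  · exact ⟨m, by rw [Function.update_eq_self], fun _ _ => rfl⟩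
  obtain ⟨e, he, rfl⟩ := Multiset.mem_map.1 hx
  obtain ⟨m, rfl⟩ := Multiset.exists_cons_of_mem he
  refine ⟨sw i e b ::ₘ m, by rw [quotMonomial_sw hi, sw_eq_update], fun j hj => ?_⟩
  simp [sw, hj]

theorem exists_quotMonomial_eq_cons_eqOn (F : Finset (Fin n)) (hF : ∀ i ∈ F, (i : ℕ) < t)
    (a b : Idx n r) (m : Multiset (Idx n r)) (ha : ∀ i ∈ F, a i ∈ (b ::ₘ m).map fun c => c i) :
    ∃ b' m', quotMonomial k s t (b ::ₘ m) = quotMonomial k s t (b' ::ₘ m') ∧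
      (∀ i ∈ F, b' i = a i) ∧ ∀ i ∉ F, b' i = b i := by
  induction F using Finset.induction_on generalizing b m with
  | empty => exact ⟨b, m, rfl, by simp, fun _ _ => rfl⟩
  | insert i F hiF ih =>
    obtain ⟨m₁, hm₁, hmap⟩ := exists_quotMonomial_eq_cons_update (k := k) (s := s)
      (hF i (mem_insert_self i F)) (ha i (mem_insert_self i F))
    have ha₁ : ∀ j ∈ F, a j ∈ (Function.update b i (a i) ::ₘ m₁).map fun c => c j := by
      intro j hj
      have hji : j ≠ i := ne_of_mem_of_not_mem hj hiF
      simpa [Multiset.map_cons, Function.update_of_ne hji, hmap j hji] using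
        ha j (mem_insert_of_mem hj)
    obtain ⟨b', m', hm', hb'F, hb'⟩ :=
      ih (fun j hj => hF j (mem_insert_of_mem hj)) _ _ ha₁
    refine ⟨b', m', hm₁.trans hm', fun j hj => ?_, fun j hj => ?_⟩
    · rcases mem_insert.1 hj with rfl | hj
      · rw [hb' j hiF, Function.update_self]
      · exact hb'F j hj
    · rw [hb' j fun h => hj (mem_insert_of_mem h),
        Function.update_of_ne (by rintro rfl; simp at hj)]

theorem exists_quotMonomial_eq_cons_of_eqAbove (hr : ∀ i, 2 ≤ r i) (hs : 2 ≤ s) (hst : s ≤ t)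
    (hsn : s ≤ n) {a b : Idx n r} (hb : EqAbove s b a) (m : Multiset (Idx n r))
    (hlo : sNorm s a ≤ sNorm s b + (m.map (sNorm s)).sum)
    (hhi : sNorm s b + (m.map (sNorm s)).sum ≤ sNorm s a + Multiset.card m * sNormMax n s r) :
    ∃ m', quotMonomial k s t (b ::ₘ m) = quotMonomial k s t (a ::ₘ m') := by
  induction m using Multiset.induction_on generalizing b with
  | empty =>
    exact ⟨0, quotMonomial_cons_of_sEquiv (sEquiv_of_sNorm_eq (by simp at hlo hhi; omega) hb) 0⟩
  | cons e m ih =>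
    simp only [Multiset.map_cons, Multiset.sum_cons, Multiset.card_cons, add_one_mul] at hlo hhi
    have := sNorm_le_sNormMax (s := s) a
    have := sNorm_le_sNormMax (s := s) b
    have := sNorm_le_sNormMax (s := s) e
    have := sum_map_sNorm_le (s := s) m
    -- `e` keeps the least `s`-norm for which `b` and the rest `m` still satisfy the bounds.
    set x := max (sNorm s b + sNorm s e - sNormMax n s r) (sNorm s b + sNorm s e +
      (m.map (sNorm s)).sum - (sNorm s a + Multiset.card m * sNormMax n s r))
    obtain ⟨e', he', he'x⟩ := exists_eqAbove_sNorm_eq (s := s) e (N := x) (by omega)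
    obtain ⟨b', hb', hb'x⟩ :=
      exists_eqAbove_sNorm_eq (s := s) b (N := sNorm s b + sNorm s e - x) (by omega)
    obtain ⟨m', hm'⟩ := ih (hb'.trans hb) (by omega) (by omega)
    refine ⟨e' ::ₘ m', ?_⟩
    rw [quotMonomial_cons_cons_eq_of_sNorm_add_eq hr hs hst hsn hb' he' (by omega),
      Multiset.cons_swap, quotMonomial_cons_congr e' hm', Multiset.cons_swap]

theorem quotMonomial_eq_of_profile_eq [Nontrivial k] (hr : ∀ i, 2 ≤ r i) (hs : 2 ≤ s)
    (hst : s ≤ t) (hsn : s ≤ n) {m m' : Multiset (Idx n r)} (h : profile s t m = profile s t m') :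
    quotMonomial k s t m = quotMonomial k s t m' := by
  induction m using Multiset.induction_on generalizing m' with
  | empty => rw [Multiset.card_eq_zero.1 (card_eq_of_profile_eq h).symm]
  | cons a m ih =>
    -- Find `b ∈ m'` with the tail of `a`, give it the middle entries of `a` by swaps and then
    -- the `s`-norm of `a` by redistribution; the remaining profiles agree by cancellation.
    obtain ⟨-, hmid, htail⟩ := profile_eq_iff.1 h
    obtain ⟨b, hb, hba⟩ : ∃ b ∈ m', tail t b = tail t a := Multiset.mem_map.1 <| by
      rw [← htail]; exact Multiset.mem_map_of_mem _ (Multiset.mem_cons_self a m)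
    obtain ⟨m₁, rfl⟩ := Multiset.exists_cons_of_mem hb
    obtain ⟨b', m₂, hm₂, hb'mid, hb'⟩ := exists_quotMonomial_eq_cons_eqOn (k := k) (s := s)
      (midCoords n s t) (fun i hi => (mem_midCoords.1 hi).2) a b m₁ fun i hi => by
        rw [← hmid ⟨i, hi⟩]; exact Multiset.mem_map_of_mem _ (Multiset.mem_cons_self a m)
    have hb'a : EqAbove s b' a := fun i hi => by
      by_cases hit : (i : ℕ) < t
      · exact hb'mid i (mem_midCoords.2 ⟨hi, hit⟩)
      · rw [hb' i (by simp; omega)]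
        exact congrFun hba ⟨i, mem_tailCoords.2 (by omega)⟩
    have h₂ := (profile_eq_of_quotMonomial_eq hst hm₂).symm.trans h.symm
    have hnorm := (profile_eq_iff.1 h₂).1
    have hcard := card_eq_of_profile_eq h₂
    have := sum_map_sNorm_le (s := s) m
    simp only [Multiset.map_cons, Multiset.sum_cons, Multiset.card_cons] at hnorm hcard
    obtain ⟨m₃, hm₃⟩ := exists_quotMonomial_eq_cons_of_eqAbove (k := k) hr hs hst hsn hb'a m₂
      (by omega) (by rw [Nat.add_right_cancel hcard]; omega)
    have h₃ := (profile_eq_of_quotMonomial_eq hst (hm₂.trans hm₃)).symm.trans h.symm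
    rw [profile_cons, profile_cons] at h₃
    rw [hm₂, hm₃]
    exact quotMonomial_cons_congr a (ih (add_left_cancel h₃).symm)

end Spanning

section Counting

variable {n s t : ℕ} {r : Fin n → ℕ}

abbrev DegreeProfile (n s t : ℕ) (r : Fin n → ℕ) (d : ℕ) : Type :=
  Fin (d * sNormMax n s r + 1) × (∀ j : midCoords n s t, Sym (Fin (r j)) d) ×
    Sym (Tail n t r) d

def DegreeProfile.toProfile {d : ℕ} (x : DegreeProfile n s t r d) : Profile n s t r :=
  (x.1, fun j => x.2.1 j, x.2.2)

theorem DegreeProfile.toProfile_injective {d : ℕ} :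
    Function.Injective (toProfile : DegreeProfile n s t r d → Profile n s t r) := by
  rintro ⟨T, μ, τ⟩ ⟨T', μ', τ'⟩ h
  simp only [toProfile, Prod.mk.injEq, funext_iff] at h
  obtain ⟨hT, hμ, hτ⟩ := h
  exact Prod.ext (Fin.ext hT) (Prod.ext (funext fun j => Sym.coe_injective (hμ j))
    (Sym.coe_injective hτ))

theorem exists_degreeProfile_toProfile_eq {d : ℕ} {m : Multiset (Idx n r)}
    (hm : Multiset.card m = d) : ∃ x : DegreeProfile n s t r d, x.toProfile = profile s t m := by
  have := sum_map_sNorm_le (s := s) m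
  exact ⟨(⟨(m.map (sNorm s)).sum, by rw [hm] at this; omega⟩,
    fun j => ⟨m.map fun a => a j, by simp [hm]⟩, ⟨m.map (tail t), by simp [hm]⟩), rfl⟩

theorem exists_profile_eq_toProfile (hr : ∀ i, 0 < r i) (hst : s ≤ t) {d : ℕ}
    (x : DegreeProfile n s t r d) :
    ∃ m : Multiset (Idx n r), Multiset.card m = d ∧ profile s t m = x.toProfile := by
  classical
  obtain ⟨T, μ, τ⟩ := x
  choose g hg using fun j => (μ j).exists_map_univ_val_eq
  obtain ⟨gτ, hgτ⟩ := τ.exists_map_univ_val_eq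
  obtain ⟨f, hf, hfT⟩ := exists_le_sum_eq (univ : Finset (Fin d)) (fun _ => sNormMax n s r)
    (N := T) (by simp only [sum_const, card_univ, Fintype.card_fin, smul_eq_mul]; omega)
  let G : Fin d → Idx n r := fun l i =>
    if hi : i ∈ midCoords n s t then g ⟨i, hi⟩ l
    else if hi' : i ∈ tailCoords n t then gτ l ⟨i, hi'⟩ else ⟨0, hr i⟩
  choose A hA hAf using fun l => exists_eqAbove_sNorm_eq (s := s) (G l) (hf l)
  refine ⟨univ.val.map A, by simp, Prod.ext ?_ (Prod.ext (funext fun j => ?_) ?_)⟩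
  · show ((univ.val.map A).map (sNorm s)).sum = T
    rw [Multiset.map_map, sum_map_val]
    simp only [Function.comp_apply, hAf, hfT]
  · show (univ.val.map A).map (fun a => a j) = (μ j : Multiset (Fin (r j)))
    rw [← hg j, Multiset.map_map]
    congr 1
    funext l
    exact (hA l j (mem_midCoords.1 j.2).1).trans (dif_pos j.2)
  · show (univ.val.map A).map (tail t) = (τ : Multiset (Tail n t r))
    rw [← hgτ, Multiset.map_map]
    congr 1
    funext l i
    have hit := mem_tailCoords.1 i.2
    have hnm : (i : Fin n) ∉ midCoords n s t := by simp; omega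
    exact (hA l i (hst.trans hit)).trans ((dif_neg hnm).trans (dif_pos i.2))

theorem card_degreeProfile (d : ℕ) :
    Fintype.card (DegreeProfile n s t r d) = (d * sNormMax n s r + 1) *
      (d + ∏ i ∈ tailCoords n t, r i - 1).choose d *
      ∏ j ∈ midCoords n s t, (d + r j - 1).choose d := by
  simp only [Fintype.card_prod, Fintype.card_fin, Fintype.card_pi, Sym.card_sym_eq_choose,
    prod_coe_sort (midCoords n s t) fun j => (r j + d - 1).choose d,
    prod_coe_sort (tailCoords n t) r, add_comm d]
  ring

end Counting

/-- the Hilbert function of `R/Ĩ(s,t)` for `2 ≤ s ≤ t`: the dimension of the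
degree-`d` graded piece (the span of the images of the degree-`d` monomials) equals
`(d·Σ_{j≤s}(r j − 1) + 1) · C(d + r (t+1)⋯r n − 1, d) · Π_{s<i≤t} C(d + r i − 1, d)`. -/
theorem hilbert_function_ITilde (k : Type) [Field k] (n s t : ℕ) (r : Fin n → ℕ)
    (hr : ∀ i, 2 ≤ r i) (hs : 2 ≤ s) (hst : s ≤ t) (htn : t ≤ n) (d : ℕ) :
    Module.finrank k
      (Submodule.span k
        ((fun u : IQ n s r →₀ ℕ =>
            Ideal.Quotient.mk (ITilde k s t r) (MvPolynomial.monomial u (1 : k))) ''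
          {u | (u.sum fun _ e => e) = d})) =
      (d * (∑ i ∈ Finset.univ.filter (fun i : Fin n => (i : ℕ) < s), (r i - 1)) + 1) *
        Nat.choose (d + (∏ i ∈ Finset.univ.filter (fun i : Fin n => t ≤ (i : ℕ)), r i) - 1) d *
        ∏ i ∈ Finset.univ.filter (fun i : Fin n => s ≤ (i : ℕ) ∧ (i : ℕ) < t),
          Nat.choose (d + r i - 1) d := by
  choose σ hσd hσ using exists_profile_eq_toProfile (d := d) (fun i => two_pos.trans_le (hr i)) hst
  have hrange : quotMonomial k s t '' {m | Multiset.card m = d} =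
      Set.range fun x => quotMonomial k s t (σ x) := by
    ext y
    constructor
    · rintro ⟨m, hm, rfl⟩
      obtain ⟨x, hx⟩ := exists_degreeProfile_toProfile_eq (s := s) (t := t) hm
      exact ⟨x, quotMonomial_eq_of_profile_eq hr hs hst (hst.trans htn) ((hσ x).trans hx)⟩
    · rintro ⟨x, rfl⟩
      exact ⟨σ x, hσd x, rfl⟩
  have hli : LinearIndependent k fun x => quotMonomial k s t (σ x) := by
    refine LinearIndependent.of_comp (quotProfileHom k hst).toLinearMap ?_
    have hcomp : (quotProfileHom k hst).toLinearMap ∘ (fun x => quotMonomial k s t (σ x)) =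
        AddMonoidAlgebra.basis _ k ∘ DegreeProfile.toProfile :=
      funext fun x => by simp [quotProfileHom_quotMonomial, hσ, AddMonoidAlgebra.basis_apply]
    rw [hcomp]
    exact (AddMonoidAlgebra.basis _ k).linearIndependent.comp _ DegreeProfile.toProfile_injective
  rw [image_monomial_eq_image_quotMonomial, hrange, finrank_span_eq_card hli, card_degreeProfile]
  rfl
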